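/- Let g,h,k ∈ G_0 be such that gh, hk and ghk also belong to G_0. Then the cocycle identity Ω_0(g,h) + Ω_0(gh,k) = Ω_0(h,k) + Ω_0(g,hk) holds; equivalently, the multiplication (r,g)·(s,h) = (r + s + Ω_0(g,h), gh) on ℝ × G_0 is associative wherever all the products are defined. -/

import Mathlib

open Complex Matrix Real

noncomputable section

abbrev M2 : Type := Matrix (Fin 2) (Fin 2) ℂ

/-- `G_0`: matrices `!![a,b; 0, conj a]` with `|a| = 1` and `Arg a ∈ (−π/3, π/3)`. -/
def G0 : Set M2 :=
  {m | ∃ a b : ℂ, m = !![a, b; 0, (starRingEnd ℂ) a] ∧ ‖a‖ = 1 ∧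
    Complex.arg a ∈ Set.Ioo (-(π / 3)) (π / 3)}

/-- `Ω_0(g,h) = Im(−b(g)·conj(b(h)) / (a(g)·a(h)))`. -/
def Omega0 (g h : M2) : ℝ :=
  (-(g 0 1) * (starRingEnd ℂ) (h 0 1) / (g 0 0 * h 0 0)).im

/-! The identity already holds before taking imaginary parts: `-b(g) conj(b(h)) / (a(g) a(h))`
is a `ℂ`-valued 2-cocycle on the group of invertible matrices `!![a, b; 0, conj a]`, and `Ω_0` is
its imaginary part. Expanding `b(gh) = a(g) b(h) + b(g) conj(a(h))`, both sides reduce to the same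
three terms once the `(2,2)`-entry `conj a(k)` of `k` is conjugated back to `a(k)`. -/

def conjTriangular : Set M2 :=
  {m | ∃ a b : ℂ, a ≠ 0 ∧ m = !![a, b; 0, (starRingEnd ℂ) a]}

def complexCocycle (g h : M2) : ℂ :=
  -(g 0 1) * (starRingEnd ℂ) (h 0 1) / (g 0 0 * h 0 0)

lemma Omega0_eq_im_complexCocycle (g h : M2) : Omega0 g h = (complexCocycle g h).im := rfl

lemma G0_subset_conjTriangular : G0 ⊆ conjTriangular := by
  rintro m ⟨a, b, rfl, ha, -⟩
  exact ⟨a, b, norm_ne_zero_iff.mp (ha ▸ one_ne_zero), rfl⟩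

lemma conjTriangular_mul (a b a' b' : ℂ) :
    !![a, b; 0, (starRingEnd ℂ) a] * !![a', b'; 0, (starRingEnd ℂ) a'] =
      !![a * a', a * b' + b * (starRingEnd ℂ) a'; 0, (starRingEnd ℂ) (a * a')] := by
  simp

lemma complexCocycle_add_complexCocycle {g h k : M2}
    (hg : g ∈ conjTriangular) (hh : h ∈ conjTriangular) (hk : k ∈ conjTriangular) :
    complexCocycle g h + complexCocycle (g * h) k =
      complexCocycle h k + complexCocycle g (h * k) := by
  obtain ⟨a₁, b₁, ha₁, rfl⟩ := hg
  obtain ⟨a₂, b₂, ha₂, rfl⟩ := hh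
  obtain ⟨a₃, b₃, ha₃, rfl⟩ := hk
  simp only [complexCocycle, conjTriangular_mul, of_apply, cons_val', cons_val_zero,
    cons_val_one, empty_val', cons_val_fin_one, map_add, map_mul, Complex.conj_conj]
  field_simp
  ring

theorem statement13_general (g h k : M2)
    (hg : g ∈ G0) (hh : h ∈ G0) (hk : k ∈ G0) :
    Omega0 g h + Omega0 (g * h) k = Omega0 h k + Omega0 g (h * k) := by
  have hC := complexCocycle_add_complexCocycle (G0_subset_conjTriangular hg)
    (G0_subset_conjTriangular hh) (G0_subset_conjTriangular hk)
  simp only [Omega0_eq_im_complexCocycle, ← add_im, hC]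

/-- for `g,h,k ∈ G_0` with `gh, hk, ghk ∈ G_0`, the cocycle identity
`Ω_0(g,h) + Ω_0(gh,k) = Ω_0(h,k) + Ω_0(g,hk)` holds, i.e. the multiplication
`(r,g)·(s,h) = (r+s+Ω_0(g,h), gh)` on `ℝ × G_0` is associative wherever defined. -/
theorem statement13 (g h k : M2)
    (hg : g ∈ G0) (hh : h ∈ G0) (hk : k ∈ G0)
    (hgh : g * h ∈ G0) (hhk : h * k ∈ G0) (hghk : g * h * k ∈ G0) :
    Omega0 g h + Omega0 (g * h) k = Omega0 h k + Omega0 g (h * k) :=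
  statement13_general g h k hg hh hk
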